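/- Let X = ∏_{i=1}^d [a_i, b_i] with a_i < b_i for each i. For each i ∈ {1,…,d}, let a_i = x_{1i} < x_{2i} < ⋯ < x_{ñ_i i} = b_i be grid points of [a_i, b_i], let h_i = max_{1≤j≤ñ_i−1} (x_{(j+1)i} − x_{ji}), and let h = max_{1≤i≤d} h_i. Let f, g : X → ℝ be twice continuously differentiable with all second-order partial derivatives bounded in absolute value by M > 0 on X, and suppose g(x) = f(x) for every x ∈ X having at least one coordinate x_i equal to a grid point x_{ji}. Then sup_{x ∈ X} |g(x) − f(x)| ≤ 2M · min_{1≤i≤d} (b_i − a_i)^{1/2} · h^{3/2}. -/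

import Mathlib

open Set

/-!
Choose the coordinate `i` of the shortest side and restrict `g - f` to the line through `x`
parallel to the `i`-th axis. There it vanishes at the grid points, so `x i` lies in a grid cell
`[s, u]` of length at most `h` at whose ends it vanishes, and its second derivative is bounded by
`2M`. Rolle's theorem gives a critical point in the cell, so the first derivative is at most
`2M (u - s)` and the function itself at most `2M (u - s)²`; finally
`(u - s)² ≤ √(bᵢ - aᵢ) · h^{3/2}` since `u - s ≤ min h (bᵢ - aᵢ)`.
-/

lemma abs_le_mul_sq_of_vanishing_endpoints {φ φ' φ'' : ℝ → ℝ} {s u K : ℝ} (hsu : s < u)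
    (hφ : ∀ t ∈ Icc s u, HasDerivWithinAt φ (φ' t) (Icc s u) t)
    (hφ' : ∀ t ∈ Icc s u, HasDerivWithinAt φ' (φ'' t) (Icc s u) t)
    (hφ'' : ∀ t ∈ Icc s u, |φ'' t| ≤ K) (hs : φ s = 0) (hu : φ u = 0) :
    ∀ t ∈ Icc s u, |φ t| ≤ K * (u - s) ^ 2 := by
  have hs_mem : s ∈ Icc s u := left_mem_Icc.2 hsu.le
  have hK : 0 ≤ K := (abs_nonneg _).trans (hφ'' s hs_mem)
  obtain ⟨c, hc, hc0⟩ : ∃ c ∈ Ioo s u, φ' c = 0 :=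
    exists_hasDerivAt_eq_zero hsu (fun t ht => (hφ t ht).continuousWithinAt) (hs.trans hu.symm)
      fun t ht => (hφ t (Ioo_subset_Icc_self ht)).hasDerivAt (Icc_mem_nhds ht.1 ht.2)
  have hφ'_le : ∀ t ∈ Icc s u, ‖φ' t‖ ≤ K * (u - s) := by
    intro t ht
    have := (convex_Icc s u).norm_image_sub_le_of_norm_hasDerivWithin_le hφ' hφ''
      (Ioo_subset_Icc_self hc) ht
    rw [hc0, sub_zero, Real.norm_eq_abs] at this
    calc ‖φ' t‖ ≤ K * |t - c| := this
      _ ≤ K * (u - s) := by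
        gcongr
        exact abs_sub_le_iff.2 ⟨by linarith [ht.2, hc.1], by linarith [ht.1, hc.2]⟩
  intro t ht
  have := (convex_Icc s u).norm_image_sub_le_of_norm_hasDerivWithin_le hφ hφ'_le hs_mem ht
  rw [hs, sub_zero, Real.norm_eq_abs, Real.norm_eq_abs, abs_of_nonneg (sub_nonneg.2 ht.1)] at this
  calc |φ t| ≤ K * (u - s) * (t - s) := this
    _ ≤ K * (u - s) * (u - s) := by gcongr; exact ht.2
    _ = K * (u - s) ^ 2 := by ring

theorem abs_sub_le_of_eq_at_ends_of_line {E : Type*} [NormedAddCommGroup E] [NormedSpace ℝ E]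
    {X : Set E} (hX : UniqueDiffOn ℝ X) {f g : E → ℝ} (hf : ContDiffOn ℝ 2 f X)
    (hg : ContDiffOn ℝ 2 g X) {v : E} {M : ℝ}
    (hfbd : ∀ y ∈ X, |fderivWithin ℝ (fun z => fderivWithin ℝ f X z v) X y v| ≤ M)
    (hgbd : ∀ y ∈ X, |fderivWithin ℝ (fun z => fderivWithin ℝ g X z v) X y v| ≤ M)
    {L : ℝ → E} (hL : ∀ t, HasDerivAt L v t) {s u : ℝ} (hsu : s < u)
    (hLX : MapsTo L (Icc s u) X) (hs : g (L s) = f (L s)) (hu : g (L u) = f (L u)) :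
    ∀ t ∈ Icc s u, |g (L t) - f (L t)| ≤ 2 * M * (u - s) ^ 2 := by
  have chain {F : E → ℝ} (hF : DifferentiableOn ℝ F X) (t : ℝ) (ht : t ∈ Icc s u) :
      HasDerivWithinAt (fun t => F (L t)) (fderivWithin ℝ F X (L t) v) (Icc s u) t :=
    (hF _ (hLX ht)).hasFDerivWithinAt.comp_hasDerivWithinAt t (hL t).hasDerivWithinAt hLX
  have directional {F : E → ℝ} (hF : ContDiffOn ℝ 2 F X) :
      DifferentiableOn ℝ (fun y => fderivWithin ℝ F X y v) X :=
    ((hF.fderivWithin hX (m := 1) (by norm_num)).differentiableOn (by norm_num)).clm_apply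
      (differentiableOn_const v)
  refine abs_le_mul_sq_of_vanishing_endpoints hsu
    (fun t ht => (chain (hg.differentiableOn (by norm_num)) t ht).sub
      (chain (hf.differentiableOn (by norm_num)) t ht))
    (fun t ht => (chain (directional hg) t ht).sub (chain (directional hf) t ht))
    (fun t ht => ?_) (by rw [hs, sub_self]) (by rw [hu, sub_self])
  calc _ ≤ _ := abs_sub _ _
    _ ≤ M + M := add_le_add (hgbd _ (hLX ht)) (hfbd _ (hLX ht))
    _ = 2 * M := (two_mul M).symm

section CoordLine

variable {ι : Type*} [DecidableEq ι]

noncomputable def coordLine (x : EuclideanSpace ℝ ι) (i : ι) (t : ℝ) : EuclideanSpace ℝ ι :=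
  x + (t - x i) • EuclideanSpace.single i 1

lemma coordLine_apply (x : EuclideanSpace ℝ ι) (i j : ι) (t : ℝ) :
    coordLine x i t j = if j = i then t else x j := by
  by_cases hj : j = i
  · subst hj; simp [coordLine]
  · simp [coordLine, hj]

@[simp]
lemma coordLine_self (x : EuclideanSpace ℝ ι) (i : ι) : coordLine x i (x i) = x := by
  simp [coordLine]

lemma hasDerivAt_coordLine [Fintype ι] (x : EuclideanSpace ℝ ι) (i : ι) (t : ℝ) :
    HasDerivAt (coordLine x i) (EuclideanSpace.single i 1) t := by
  unfold coordLine
  simpa only [one_smul, id] using (((hasDerivAt_id t).sub_const (x i)).smul_const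
    (EuclideanSpace.single i (1 : ℝ))).const_add x

lemma coordLine_mem_box {a b : ι → ℝ} {x : EuclideanSpace ℝ ι} (hx : ∀ j, x j ∈ Icc (a j) (b j))
    {i : ι} {t : ℝ} (ht : t ∈ Icc (a i) (b i)) (j : ι) : coordLine x i t j ∈ Icc (a j) (b j) := by
  rw [coordLine_apply]
  split_ifs with hj
  · exact hj ▸ ht
  · exact hx j

end CoordLine

lemma uniqueDiffOn_euclidean_box {ι : Type*} [Fintype ι] {a b : ι → ℝ} (hab : ∀ i, a i < b i) :
    UniqueDiffOn ℝ {x : EuclideanSpace ℝ ι | ∀ i, x i ∈ Icc (a i) (b i)} := by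
  have hbox : {x : EuclideanSpace ℝ ι | ∀ i, x i ∈ Icc (a i) (b i)} =
      EuclideanSpace.equiv ι ℝ ⁻¹' univ.pi fun i => Icc (a i) (b i) := by
    ext; simp [Pi.le_def, forall_and]
  rw [hbox, ContinuousLinearEquiv.uniqueDiffOn_preimage_iff]
  exact UniqueDiffOn.univ_pi fun i => uniqueDiffOn_Icc (hab i)

lemma Monotone.exists_consecutive_mem_Icc {m : ℕ} {γ : Fin m → ℝ} (hγ : Monotone γ)
    (hm : 2 ≤ m) {t : ℝ} (h0 : γ ⟨0, by omega⟩ ≤ t) (hlast : t ≤ γ ⟨m - 1, by omega⟩) :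
    ∃ j k : Fin m, (k : ℕ) = j + 1 ∧ t ∈ Icc (γ j) (γ k) := by
  have hex : ∃ n, ∃ hn : n < m, t ≤ γ ⟨n, hn⟩ := ⟨m - 1, by omega, hlast⟩
  obtain ⟨hn, htn⟩ := Nat.find_spec hex
  rcases Nat.eq_zero_or_pos (Nat.find hex) with h | h
  · refine ⟨⟨0, by omega⟩, ⟨1, by omega⟩, rfl, h0, htn.trans (hγ ?_)⟩
    simp [Fin.le_def, h]
  · refine ⟨⟨Nat.find hex - 1, by omega⟩, ⟨Nat.find hex, hn⟩, (Nat.sub_add_cancel h).symm, ?_, htn⟩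
    have := Nat.find_min hex (m := Nat.find hex - 1) (by omega)
    push Not at this
    exact (this (by omega)).le

lemma sq_le_sqrt_mul_rpow_three_halves {δ h ℓ : ℝ} (hδ : 0 ≤ δ) (hδh : δ ≤ h) (hδℓ : δ ≤ ℓ) :
    δ ^ 2 ≤ √ℓ * h ^ ((3 : ℝ) / 2) := by
  have hδ_sq : δ ^ 2 = √δ * δ ^ ((3 : ℝ) / 2) := by
    rw [Real.sqrt_eq_rpow, ← Real.rpow_add' hδ (by norm_num), ← Real.rpow_natCast]
    norm_num
  rw [hδ_sq]
  gcongr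

/-- Deterministic content of Theorem 4 of the paper: if `g` interpolates `f` on all hyperplane
slices through the grid points of a box `X = ∏ [aᵢ, bᵢ]` of mesh at most `h`, and both functions
are twice continuously differentiable with all second-order partial derivatives bounded by `M`,
then `sup_{x ∈ X} |g(x) − f(x)| ≤ 2M · min_i (bᵢ − aᵢ)^{1/2} · h^{3/2}`. -/
theorem function_uniform_rate_on_grid
    (d : ℕ) (hd : 0 < d) (a b : Fin d → ℝ) (hab : ∀ i, a i < b i)
    (X : Set (EuclideanSpace ℝ (Fin d)))
    (hXdef : X = {x : EuclideanSpace ℝ (Fin d) | ∀ i, x i ∈ Icc (a i) (b i)})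
    (m : Fin d → ℕ) (hm : ∀ i, 2 ≤ m i)
    (grid : (i : Fin d) → Fin (m i) → ℝ)
    (hmono : ∀ i, StrictMono (grid i))
    (hfirst : ∀ i, grid i ⟨0, by have := hm i; omega⟩ = a i)
    (hlast : ∀ i, grid i ⟨m i - 1, by have := hm i; omega⟩ = b i)
    (h : ℝ)
    (hmesh : ∀ i, ∀ j k : Fin (m i), (k : ℕ) = (j : ℕ) + 1 → grid i k - grid i j ≤ h)
    (M : ℝ) (hM : 0 < M)
    (f g : EuclideanSpace ℝ (Fin d) → ℝ)
    (hf : ContDiffOn ℝ 2 f X) (hg : ContDiffOn ℝ 2 g X)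
    (hfbd : ∀ x ∈ X, ∀ i j : Fin d,
      |fderivWithin ℝ (fun y => fderivWithin ℝ f X y (EuclideanSpace.single i 1)) X x
        (EuclideanSpace.single j 1)| ≤ M)
    (hgbd : ∀ x ∈ X, ∀ i j : Fin d,
      |fderivWithin ℝ (fun y => fderivWithin ℝ g X y (EuclideanSpace.single i 1)) X x
        (EuclideanSpace.single j 1)| ≤ M)
    (hinterp : ∀ x ∈ X, (∃ i : Fin d, ∃ j : Fin (m i), x i = grid i j) → g x = f x) :
    ∀ x ∈ X,
      |g x - f x| ≤ 2 * M * (⨅ i : Fin d, Real.sqrt (b i - a i)) * h ^ ((3 : ℝ) / 2) := by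
  have : Nonempty (Fin d) := ⟨⟨0, hd⟩⟩
  obtain ⟨i, hi⟩ := exists_eq_ciInf_of_finite (f := fun i => √(b i - a i))
  rw [← hi]
  subst hXdef
  intro x hx
  obtain ⟨j, k, hjk, hxjk⟩ := (hmono i).monotone.exists_consecutive_mem_Icc (hm i)
    ((hfirst i).symm ▸ (hx i).1) ((hlast i).symm ▸ (hx i).2)
  have hjk_lt : grid i j < grid i k := hmono i (by simp [Fin.lt_def, hjk])
  have hjk_sub : Icc (grid i j) (grid i k) ⊆ Icc (a i) (b i) := by
    rw [← hfirst i, ← hlast i]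
    refine Icc_subset_Icc ((hmono i).monotone (Nat.zero_le _)) ((hmono i).monotone ?_)
    show (k : ℕ) ≤ m i - 1
    omega
  have hline_mem (t : ℝ) (ht : t ∈ Icc (grid i j) (grid i k)) :
      ∀ l, coordLine x i t l ∈ Icc (a l) (b l) :=
    coordLine_mem_box hx (hjk_sub ht)
  have hslice (l : Fin (m i)) (hl : grid i l ∈ Icc (grid i j) (grid i k)) :
      g (coordLine x i (grid i l)) = f (coordLine x i (grid i l)) :=
    hinterp _ (hline_mem _ hl) ⟨i, l, by rw [coordLine_apply, if_pos rfl]⟩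
  have hline := abs_sub_le_of_eq_at_ends_of_line (uniqueDiffOn_euclidean_box hab) hf hg
    (fun y hy => hfbd y hy i i) (fun y hy => hgbd y hy i i) (hasDerivAt_coordLine x i) hjk_lt
    hline_mem (hslice j (left_mem_Icc.2 hjk_lt.le)) (hslice k (right_mem_Icc.2 hjk_lt.le))
    (x i) hxjk
  rw [coordLine_self] at hline
  calc |g x - f x| ≤ 2 * M * (grid i k - grid i j) ^ 2 := hline
    _ ≤ 2 * M * (√(b i - a i) * h ^ ((3 : ℝ) / 2)) := by
      gcongr
      exact sq_le_sqrt_mul_rpow_three_halves (sub_nonneg.2 hjk_lt.le) (hmesh i j k hjk)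
        (sub_le_sub (hjk_sub (right_mem_Icc.2 hjk_lt.le)).2 (hjk_sub (left_mem_Icc.2 hjk_lt.le)).1)
    _ = 2 * M * √(b i - a i) * h ^ ((3 : ℝ) / 2) := by ring
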